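/- arXiv:1207.2565 — 2 statements merged into one kernel-verified Lean document; each statement's English description precedes it below -/
import Mathlib

section
/- With the kernel K(x,y)=ψ(y−Ax)+ψ(x−Ay), the first eigenvalues themselves satisfy lim_{p→∞} λ_{1,p}(ℝ^d) = 0; in particular there is no uniform positive lower bound for λ_{1,p}(ℝ^d) over p ≥ 1. -/
open MeasureTheory Filter

/-- The first eigenvalue of the nonlocal `p`-Laplacian with kernel `K` on the whole space. -/
noncomputable def lambdaOne (d : ℕ) (p : ℝ)
    (K : EuclideanSpace ℝ (Fin d) → EuclideanSpace ℝ (Fin d) → ℝ) : ℝ :=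
  sInf { r : ℝ |
    ∃ u : EuclideanSpace ℝ (Fin d) → ℝ,
      MemLp u (ENNReal.ofReal p) volume ∧
      ¬ u =ᵐ[volume] (0 : EuclideanSpace ℝ (Fin d) → ℝ) ∧
      r = (∫ x, ∫ y, K x y * |u x - u y| ^ p) / (∫ x, |u x| ^ p) }

/-! The test function `u x = (1 + ‖x‖) ^ (-ε)` lies in `Lᵖ` as soon as `ε * p > d`. Where
`K x y ≠ 0`, either `y` is within distance `1` of `A x` or `x` is within distance `1` of `A y`, so
`1 + ‖x‖` and `1 + ‖y‖` agree up to a factor `κ` depending only on `A`; choosing `κ ^ ε = 3 / 2`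
gives `|u x - u y| ≤ u x / 2` there. As `K x ·` is bounded and supported in a set of measure
bounded independently of `x`, the Rayleigh quotient of `u` is then `O(2⁻ᵖ)`. -/

open Metric

section Rayleigh

variable {α : Type*} [MeasurableSpace α] {μ : Measure α} {K : α → α → ℝ} {u : α → ℝ}
  {p B V θ : ℝ}

noncomputable def rayleighQuotient (μ : Measure α) (K : α → α → ℝ) (p : ℝ) (u : α → ℝ) : ℝ :=
  (∫ x, ∫ y, K x y * |u x - u y| ^ p ∂μ ∂μ) / ∫ x, |u x| ^ p ∂μ

theorem rayleighQuotient_nonneg (hK : ∀ x y, 0 ≤ K x y) : 0 ≤ rayleighQuotient μ K p u :=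
  div_nonneg
    (integral_nonneg fun _ ↦ integral_nonneg fun _ ↦ mul_nonneg (hK _ _) (by positivity))
    (integral_nonneg fun _ ↦ by positivity)

theorem integral_mul_abs_sub_rpow_le {N : Set α} (x : α) (hp : 0 ≤ p) (hθ : 0 ≤ θ)
    (hK : ∀ y, 0 ≤ K x y) (hKB : ∀ y, K x y ≤ B) (hN : MeasurableSet N) (hNfin : μ N ≠ ⊤)
    (hKN : ∀ y, K x y ≠ 0 → y ∈ N ∧ |u x - u y| ≤ θ * |u x|) :
    ∫ y, K x y * |u x - u y| ^ p ∂μ ≤ B * μ.real N * (θ * |u x|) ^ p := by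
  have hc : 0 ≤ B * (θ * |u x|) ^ p := mul_nonneg ((hK x).trans (hKB x)) (by positivity)
  have hpointwise : ∀ y, K x y * |u x - u y| ^ p ≤ N.indicator (fun _ ↦ B * (θ * |u x|) ^ p) y := by
    intro y
    by_cases hxy : K x y = 0
    · simpa [hxy] using Set.indicator_nonneg (fun _ _ ↦ hc) y
    obtain ⟨hyN, hdiff⟩ := hKN y hxy
    rw [Set.indicator_of_mem hyN]
    exact mul_le_mul (hKB y) (Real.rpow_le_rpow (abs_nonneg _) hdiff hp) (by positivity)
      ((hK x).trans (hKB x))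
  calc ∫ y, K x y * |u x - u y| ^ p ∂μ
      ≤ ∫ y, N.indicator (fun _ ↦ B * (θ * |u x|) ^ p) y ∂μ :=
        integral_mono_of_nonneg (ae_of_all _ fun y ↦ mul_nonneg (hK y) (by positivity))
          ((integrable_indicator_iff hN).2 (integrableOn_const hNfin)) (ae_of_all _ hpointwise)
    _ = B * μ.real N * (θ * |u x|) ^ p := by
        rw [integral_indicator_const _ hN, smul_eq_mul]; ring

theorem rayleighQuotient_le {N : α → Set α} (hp : 0 ≤ p) (hθ : 0 ≤ θ) (hK : ∀ x y, 0 ≤ K x y)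
    (hKB : ∀ x y, K x y ≤ B) (hN : ∀ x, MeasurableSet (N x)) (hNfin : ∀ x, μ (N x) ≠ ⊤)
    (hNV : ∀ x, μ.real (N x) ≤ V)
    (hKN : ∀ x y, K x y ≠ 0 → y ∈ N x ∧ |u x - u y| ≤ θ * |u x|)
    (hu : Integrable (fun x ↦ |u x| ^ p) μ) (hden : 0 < ∫ x, |u x| ^ p ∂μ) :
    rayleighQuotient μ K p u ≤ B * V * θ ^ p := by
  have hinner : ∀ x, ∫ y, K x y * |u x - u y| ^ p ∂μ ≤ B * V * θ ^ p * |u x| ^ p := by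
    intro x
    calc ∫ y, K x y * |u x - u y| ^ p ∂μ ≤ B * μ.real (N x) * (θ * |u x|) ^ p :=
          integral_mul_abs_sub_rpow_le x hp hθ (hK x) (hKB x) (hN x) (hNfin x) (hKN x)
      _ = B * μ.real (N x) * θ ^ p * |u x| ^ p := by
          rw [Real.mul_rpow hθ (abs_nonneg _)]; ring
      _ ≤ B * V * θ ^ p * |u x| ^ p := by
          gcongr
          exact (hK x x).trans (hKB x x)
          exact hNV x
  rw [rayleighQuotient, div_le_iff₀ hden, ← integral_const_mul]
  exact integral_mono_of_nonneg
    (ae_of_all _ fun x ↦ integral_nonneg fun y ↦ mul_nonneg (hK x y) (by positivity))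
    (hu.const_mul _) (ae_of_all _ hinner)

theorem not_ae_eq_zero_of_integral_abs_rpow_pos (hp : p ≠ 0)
    (h : 0 < ∫ x, |u x| ^ p ∂μ) : ¬ u =ᵐ[μ] 0 := by
  intro hu
  have hzero : (fun x ↦ |u x| ^ p) =ᵐ[μ] 0 :=
    hu.mono fun x hx ↦ by simp [hx, Real.zero_rpow hp]
  exact h.ne' (by simp [integral_congr_ae hzero])

end Rayleigh

section LambdaOne

variable {d : ℕ} {p : ℝ} {K : EuclideanSpace ℝ (Fin d) → EuclideanSpace ℝ (Fin d) → ℝ}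

theorem lambdaOne_nonneg (hK : ∀ x y, 0 ≤ K x y) : 0 ≤ lambdaOne d p K :=
  Real.sInf_nonneg <| by rintro _ ⟨u, -, -, rfl⟩; exact rayleighQuotient_nonneg hK

theorem lambdaOne_le_rayleighQuotient (hK : ∀ x y, 0 ≤ K x y)
    {u : EuclideanSpace ℝ (Fin d) → ℝ} (hu : MemLp u (ENNReal.ofReal p) volume)
    (hu0 : ¬ u =ᵐ[volume] 0) : lambdaOne d p K ≤ rayleighQuotient volume K p u :=
  csInf_le ⟨0, by rintro _ ⟨v, -, -, rfl⟩; exact rayleighQuotient_nonneg hK⟩ ⟨u, hu, hu0, rfl⟩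

end LambdaOne

theorem Real.abs_rpow_neg_sub_rpow_neg_le {s t κ ε : ℝ} (hs : 0 < s) (ht : 0 < t) (hκ : 1 ≤ κ)
    (hε : 0 ≤ ε) (hts : t ≤ κ * s) (hst : s ≤ κ * t) :
    |s ^ (-ε) - t ^ (-ε)| ≤ (κ ^ ε - 1) * s ^ (-ε) := by
  have hκε : 1 ≤ κ ^ ε := Real.one_le_rpow hκ hε
  have hcompare : ∀ a b : ℝ, 0 < a → 0 < b → b ≤ κ * a → a ^ (-ε) ≤ κ ^ ε * b ^ (-ε) := by
    intro a b ha hb hba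
    calc a ^ (-ε) = κ ^ ε * (κ * a) ^ (-ε) := by
          rw [Real.mul_rpow (by positivity) ha.le, ← mul_assoc, ← Real.rpow_add (by positivity),
            add_neg_cancel, Real.rpow_zero, one_mul]
      _ ≤ κ ^ ε * b ^ (-ε) :=
          mul_le_mul_of_nonneg_left (Real.rpow_le_rpow_of_nonpos hb hba (neg_nonpos.2 hε))
            (by positivity)
  have h₁ := hcompare s t hs ht hts
  have h₂ := hcompare t s ht hs hst
  have hs' : 0 < s ^ (-ε) := Real.rpow_pos_of_pos hs _
  rw [abs_sub_le_iff]
  constructor <;> nlinarith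

section Geometry

variable {E : Type*} [NormedAddCommGroup E] [NormedSpace ℝ E] {x y : E}

theorem one_add_norm_le_of_norm_sub_apply_le {F : Type*} [NormedAddCommGroup F] [NormedSpace ℝ F]
    (T : E →L[ℝ] F) {y : F} {r : ℝ} (h : ‖y - T x‖ ≤ r) :
    1 + ‖y‖ ≤ (1 + r + ‖T‖) * (1 + ‖x‖) := by
  have hy : ‖y‖ ≤ ‖T‖ * ‖x‖ + r := by
    linarith [norm_le_norm_add_norm_sub' y (T x), T.le_opNorm x, norm_sub_rev y (T x)]
  nlinarith [norm_nonneg x, norm_nonneg T, (norm_nonneg _).trans h]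

variable (T : E ≃L[ℝ] E)

theorem norm_sub_symm_apply_le (h : ‖y - T x‖ ≤ 1) :
    ‖x - T.symm y‖ ≤ ‖T.symm.toContinuousLinearMap‖ := by
  calc ‖x - T.symm y‖ = ‖T.symm.toContinuousLinearMap (T x - y)‖ := by simp
    _ ≤ ‖T.symm.toContinuousLinearMap‖ * ‖T x - y‖ := ContinuousLinearMap.le_opNorm _ _
    _ ≤ ‖T.symm.toContinuousLinearMap‖ := by
        rw [norm_sub_rev]; exact mul_le_of_le_one_right (norm_nonneg _) h

noncomputable def growthFactor : ℝ :=
  2 + ‖T.toContinuousLinearMap‖ + 2 * ‖T.symm.toContinuousLinearMap‖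

theorem one_lt_growthFactor : 1 < growthFactor T := by
  unfold growthFactor
  linarith [norm_nonneg T.toContinuousLinearMap, norm_nonneg T.symm.toContinuousLinearMap]

theorem one_add_norm_le_growthFactor_mul (h : ‖y - T x‖ ≤ 1) :
    1 + ‖y‖ ≤ growthFactor T * (1 + ‖x‖) ∧ 1 + ‖x‖ ≤ growthFactor T * (1 + ‖y‖) := by
  have hy := one_add_norm_le_of_norm_sub_apply_le T.toContinuousLinearMap h
  have hx := one_add_norm_le_of_norm_sub_apply_le T.symm.toContinuousLinearMap
    (norm_sub_symm_apply_le T h)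
  have hT := norm_nonneg T.toContinuousLinearMap
  have hS := norm_nonneg T.symm.toContinuousLinearMap
  unfold growthFactor
  constructor
  · nlinarith [norm_nonneg x]
  · nlinarith [norm_nonneg y]

theorem norm_sub_le_one_or_of_add_ne_zero {ψ : E → ℝ}
    (hψ : ∀ z, ψ z ≠ 0 → z ∈ closedBall 0 1) (h : ψ (y - T x) + ψ (x - T y) ≠ 0) :
    ‖y - T x‖ ≤ 1 ∨ ‖x - T y‖ ≤ 1 := by
  by_contra! hfar
  refine h ?_
  rw [not_imp_comm.1 (hψ _) (by simpa using hfar.1), not_imp_comm.1 (hψ _) (by simpa using hfar.2),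
    add_zero]

theorem one_add_norm_le_growthFactor_mul_of_or (h : ‖y - T x‖ ≤ 1 ∨ ‖x - T y‖ ≤ 1) :
    1 + ‖y‖ ≤ growthFactor T * (1 + ‖x‖) ∧ 1 + ‖x‖ ≤ growthFactor T * (1 + ‖y‖) :=
  h.elim (one_add_norm_le_growthFactor_mul T) fun h ↦ (one_add_norm_le_growthFactor_mul T h).symm

theorem mem_closedBall_union_of_norm_sub_le_or (h : ‖y - T x‖ ≤ 1 ∨ ‖x - T y‖ ≤ 1) :
    y ∈ closedBall (T x) 1 ∪ closedBall (T.symm x) ‖T.symm.toContinuousLinearMap‖ := by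
  rcases h with h | h
  · exact Or.inl (by rwa [mem_closedBall, dist_eq_norm])
  · exact Or.inr (by rw [mem_closedBall, dist_eq_norm]; exact norm_sub_symm_apply_le T h)

end Geometry

section Decay

open Module

variable {E : Type*} [NormedAddCommGroup E]

theorem abs_one_add_norm_rpow_neg_rpow (x : E) (ε p : ℝ) :
    |(1 + ‖x‖) ^ (-ε)| ^ p = (1 + ‖x‖) ^ (-(ε * p)) := by
  rw [abs_of_nonneg (by positivity), ← Real.rpow_mul (by positivity), neg_mul]

variable [NormedSpace ℝ E] [FiniteDimensional ℝ E] [MeasurableSpace E] [BorelSpace E]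
  (μ : Measure E) [μ.IsAddHaarMeasure] {ε p : ℝ}

theorem integrable_abs_one_add_norm_rpow_neg_rpow (h : finrank ℝ E < ε * p) :
    Integrable (fun x : E ↦ |(1 + ‖x‖) ^ (-ε)| ^ p) μ := by
  simpa only [abs_one_add_norm_rpow_neg_rpow] using integrable_one_add_norm h

theorem memLp_one_add_norm_rpow_neg (hp : 0 < p) (h : finrank ℝ E < ε * p) :
    MemLp (fun x : E ↦ (1 + ‖x‖) ^ (-ε)) (ENNReal.ofReal p) μ := by
  rw [← integrable_norm_rpow_iff (Measurable.aestronglyMeasurable (by fun_prop))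
    (by simpa using hp) ENNReal.ofReal_ne_top, ENNReal.toReal_ofReal hp.le]
  exact integrable_abs_one_add_norm_rpow_neg_rpow μ h

theorem integral_abs_one_add_norm_rpow_neg_rpow_pos (h : finrank ℝ E < ε * p) :
    0 < ∫ x : E, |(1 + ‖x‖) ^ (-ε)| ^ p ∂μ := by
  rw [integral_pos_iff_support_of_nonneg (fun _ ↦ by positivity)
    (integrable_abs_one_add_norm_rpow_neg_rpow μ h)]
  have hsupp : Function.support (fun x : E ↦ |(1 + ‖x‖) ^ (-ε)| ^ p) = Set.univ :=
    Set.eq_univ_of_forall fun x ↦ by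
      rw [Function.mem_support, abs_one_add_norm_rpow_neg_rpow]; positivity
  rw [hsupp, Measure.measure_univ_pos]
  exact NeZero.ne μ

end Decay

section Eigenvalue

variable {d : ℕ} {ψ : EuclideanSpace ℝ (Fin d) → ℝ} {M : ℝ}
  (T : EuclideanSpace ℝ (Fin d) ≃L[ℝ] EuclideanSpace ℝ (Fin d))

theorem lambdaOne_le_mul_rpow (hψnn : ∀ z, 0 ≤ ψ z) (hψM : ∀ z, ψ z ≤ M)
    (hψsupp : ∀ z, ψ z ≠ 0 → z ∈ closedBall 0 1) :
    ∃ C : ℝ, ∀ ε p : ℝ, 0 ≤ ε → 0 < p → (d : ℝ) < ε * p →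
      lambdaOne d p (fun x y ↦ ψ (y - T x) + ψ (x - T y)) ≤ C * (growthFactor T ^ ε - 1) ^ p := by
  refine ⟨2 * M * (volume.real (closedBall (0 : EuclideanSpace ℝ (Fin d)) 1) +
    volume.real (closedBall (0 : EuclideanSpace ℝ (Fin d)) ‖T.symm.toContinuousLinearMap‖)),
    fun ε p hε hp hdim ↦ ?_⟩
  rw [← finrank_euclideanSpace_fin (𝕜 := ℝ) (n := d)] at hdim
  have hK : ∀ x y, 0 ≤ ψ (y - T x) + ψ (x - T y) := fun x y ↦ add_nonneg (hψnn _) (hψnn _)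
  have hden := integral_abs_one_add_norm_rpow_neg_rpow_pos volume hdim
  refine (lambdaOne_le_rayleighQuotient hK (memLp_one_add_norm_rpow_neg volume hp hdim)
    (not_ae_eq_zero_of_integral_abs_rpow_pos hp.ne' hden)).trans ?_
  refine rayleighQuotient_le
    (N := fun x ↦ closedBall (T x) 1 ∪ closedBall (T.symm x) ‖T.symm.toContinuousLinearMap‖) hp.le
    (sub_nonneg.2 (Real.one_le_rpow (one_lt_growthFactor T).le hε)) hK
    (fun x y ↦ by linarith [hψM (y - T x), hψM (x - T y)])
    (fun _ ↦ measurableSet_closedBall.union measurableSet_closedBall)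
    (fun _ ↦ measure_union_ne_top measure_closedBall_lt_top.ne measure_closedBall_lt_top.ne)
    (fun x ↦ (measureReal_union_le _ _).trans_eq ?_) (fun x y hxy ↦ ?_)
    (integrable_abs_one_add_norm_rpow_neg_rpow volume hdim) hden
  · rw [Measure.addHaar_real_closedBall_center volume (T x),
      Measure.addHaar_real_closedBall_center volume (T.symm x)]
  · have hnear := norm_sub_le_one_or_of_add_ne_zero T hψsupp hxy
    obtain ⟨hyx, hxy⟩ := one_add_norm_le_growthFactor_mul_of_or T hnear
    refine ⟨mem_closedBall_union_of_norm_sub_le_or T hnear, ?_⟩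
    rw [abs_of_pos (by positivity : (0 : ℝ) < (1 + ‖x‖) ^ (-ε))]
    exact Real.abs_rpow_neg_sub_rpow_neg_le (by positivity) (by positivity)
      (one_lt_growthFactor T).le hε hyx hxy

theorem eventually_lambdaOne_le (hψnn : ∀ z, 0 ≤ ψ z) (hψM : ∀ z, ψ z ≤ M)
    (hψsupp : ∀ z, ψ z ≠ 0 → z ∈ closedBall 0 1) :
    ∃ C : ℝ, ∀ᶠ p in atTop,
      lambdaOne d p (fun x y ↦ ψ (y - T x) + ψ (x - T y)) ≤ C * (1 / 2) ^ p := by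
  obtain ⟨C, hC⟩ := lambdaOne_le_mul_rpow T hψnn hψM hψsupp
  have hκ := one_lt_growthFactor T
  have hε : 0 < Real.logb (growthFactor T) (3 / 2) := Real.logb_pos hκ (by norm_num)
  have hθ : growthFactor T ^ Real.logb (growthFactor T) (3 / 2) - 1 = 1 / 2 := by
    rw [Real.rpow_logb (by positivity) hκ.ne' (by norm_num)]; norm_num
  refine ⟨C, ?_⟩
  filter_upwards [eventually_gt_atTop ((d : ℝ) / Real.logb (growthFactor T) (3 / 2))] with p hp
  rw [← hθ]
  exact hC _ p hε.le (lt_of_le_of_lt (by positivity) hp) ((div_lt_iff₀' hε).1 hp)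

theorem tendsto_lambdaOne_zero (hψnn : ∀ z, 0 ≤ ψ z) (hψM : ∀ z, ψ z ≤ M)
    (hψsupp : ∀ z, ψ z ≠ 0 → z ∈ closedBall 0 1) :
    Tendsto (fun p ↦ lambdaOne d p (fun x y ↦ ψ (y - T x) + ψ (x - T y))) atTop (nhds 0) := by
  obtain ⟨C, hC⟩ := eventually_lambdaOne_le T hψnn hψM hψsupp
  have hdecay : Tendsto (fun p : ℝ ↦ C * (1 / 2) ^ p) atTop (nhds 0) := by
    simpa using (tendsto_rpow_atTop_of_base_lt_one (1 / 2) (by norm_num) (by norm_num)).const_mul C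
  exact tendsto_of_tendsto_of_tendsto_of_le_of_le' tendsto_const_nhds hdecay
    (Eventually.of_forall fun _ ↦ lambdaOne_nonneg fun _ _ ↦ add_nonneg (hψnn _) (hψnn _)) hC

end Eigenvalue

theorem tendsto_first_eigenvalue_zero_no_uniform_lower_bound_general (d : ℕ)
    (ψ : EuclideanSpace ℝ (Fin d) → ℝ)
    (hψnn : ∀ z, 0 ≤ ψ z)
    (hψbdd : ∃ M : ℝ, ∀ z, ψ z ≤ M)
    (hψsupp : ∀ z, ψ z ≠ 0 → z ∈ Metric.closedBall (0 : EuclideanSpace ℝ (Fin d)) 1)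
    (A : Matrix (Fin d) (Fin d) ℝ) (hA : IsUnit A.det)
    (K : EuclideanSpace ℝ (Fin d) → EuclideanSpace ℝ (Fin d) → ℝ)
    (hK : K = fun x y =>
      ψ (y - Matrix.toEuclideanLin A x) + ψ (x - Matrix.toEuclideanLin A y)) :
    Tendsto (fun p : ℝ => lambdaOne d p K) atTop (nhds 0) ∧
      ¬ ∃ c : ℝ, 0 < c ∧ ∀ p : ℝ, 1 ≤ p → c ≤ lambdaOne d p K := by
  obtain ⟨M, hψM⟩ := hψbdd
  let T : EuclideanSpace ℝ (Fin d) ≃L[ℝ] EuclideanSpace ℝ (Fin d) :=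
    ContinuousLinearEquiv.unitsEquiv ℝ _
      ((A.isUnit_iff_isUnit_det.2 hA).map (Matrix.toEuclideanCLM (𝕜 := ℝ))).unit
  have htendsto : Tendsto (fun p : ℝ => lambdaOne d p K) atTop (nhds 0) := by
    subst hK
    exact tendsto_lambdaOne_zero T hψnn hψM hψsupp
  exact ⟨htendsto, fun ⟨c, hc, hcle⟩ ↦
    hc.not_ge (ge_of_tendsto htendsto (eventually_atTop.2 ⟨1, hcle⟩))⟩

theorem tendsto_first_eigenvalue_zero_no_uniform_lower_bound (d : ℕ) (hd : 1 ≤ d)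
    (ψ : EuclideanSpace ℝ (Fin d) → ℝ)
    (hψmeas : Measurable ψ) (hψnn : ∀ z, 0 ≤ ψ z)
    (hψbdd : ∃ M : ℝ, ∀ z, ψ z ≤ M)
    (hψsupp : ∀ z, ψ z ≠ 0 → z ∈ Metric.closedBall (0 : EuclideanSpace ℝ (Fin d)) 1)
    (A : Matrix (Fin d) (Fin d) ℝ) (hA : IsUnit A.det)
    (K : EuclideanSpace ℝ (Fin d) → EuclideanSpace ℝ (Fin d) → ℝ)
    (hK : K = fun x y =>
      ψ (y - Matrix.toEuclideanLin A x) + ψ (x - Matrix.toEuclideanLin A y)) :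
    Tendsto (fun p : ℝ => lambdaOne d p K) atTop (nhds 0) ∧
      ¬ ∃ c : ℝ, 0 < c ∧ ∀ p : ℝ, 1 ≤ p → c ≤ lambdaOne d p K :=
  tendsto_first_eigenvalue_zero_no_uniform_lower_bound_general d ψ hψnn hψbdd hψsupp A hA K hK
end

section
/- Let 1 ≤ p < ∞. For every continuously differentiable, compactly supported function φ : ℝ^d → ℝ with ‖φ‖_{L^p(ℝ^d)} = 1, the first eigenvalue satisfies the upper bound λ_{1,p}(ℝ^d) ≤ 2·(∫_{ℝ^d} ψ(z) dz)·∫_{ℝ^d} |φ(x) − φ(Ax)|^p dx. -/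
open MeasureTheory Filter

/-!
Test the Rayleigh quotient with the dilates `u_S = φ (S⁻¹ •)`. The kernel is symmetric, so the
numerator is twice `∫∫ ψ (y - A x) |u_S x - u_S y| ^ p`; substituting `y = A x + z` and then
`x = S w` turns this into `2 S ^ d ∫∫ ψ z |φ w - φ (A w + S⁻¹ • z)| ^ p`, while the denominator
is `S ^ d`. As `S → ∞` the integrand converges pointwise to `ψ z |φ w - φ (A w)| ^ p`, and
dominated convergence applies because, `A` being invertible, all these integrands are supported
in one compact set.
-/

open Set Metric Function Topology

theorem ne_zero_or_ne_zero_of_abs_sub_rpow_ne_zero {a b p : ℝ} (hp : p ≠ 0)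
    (h : |a - b| ^ p ≠ 0) : a ≠ 0 ∨ b ≠ 0 := by
  by_contra! hab
  simp [hab, hp] at h

theorem norm_mul_abs_sub_rpow_le {s a b M C p : ℝ} (hs : |s| ≤ M) (ha : |a| ≤ C)
    (hb : |b| ≤ C) (hp : 0 ≤ p) : ‖s * |a - b| ^ p‖ ≤ M * (2 * C) ^ p := by
  rw [norm_mul, Real.norm_eq_abs, Real.norm_of_nonneg (by positivity)]
  have hab : |a - b| ≤ 2 * C := by linarith [abs_sub a b]
  exact mul_le_mul hs (Real.rpow_le_rpow (abs_nonneg _) hab hp) (by positivity)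
    ((abs_nonneg s).trans hs)

theorem norm_le_indicator_of_support_subset {X : Type*} {f : X → ℝ} {s : Set X} {C : ℝ}
    (hfs : support f ⊆ s) (hC : ∀ x, ‖f x‖ ≤ C) (x : X) :
    ‖f x‖ ≤ s.indicator (fun _ => C) x := by
  by_cases hx : x ∈ s
  · simpa [hx] using hC x
  · simp [hx, notMem_support.1 (fun h => hx (hfs h))]

theorem integrable_of_support_subset_isCompact {X : Type*} [TopologicalSpace X]
    [MeasurableSpace X] [OpensMeasurableSpace X] [T2Space X] {μ : Measure X}
    [IsFiniteMeasureOnCompacts μ] {f : X → ℝ} {K : Set X} (hK : IsCompact K)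
    (hfK : support f ⊆ K) (hf : AEStronglyMeasurable f μ) {C : ℝ} (hC : ∀ x, ‖f x‖ ≤ C) :
    Integrable f μ :=
  (integrableOn_iff_integrable_of_support_subset hfK).1 <|
    Measure.integrableOn_of_bounded hK.measure_lt_top.ne hf (ae_of_all _ hC)

theorem integral_integral_add_swap {α : Type*} [MeasurableSpace α] {μ : Measure α}
    [SigmaFinite μ] {f : α → α → ℝ} (hf : Integrable (uncurry f) (μ.prod μ)) :
    ∫ x, ∫ y, (f x y + f y x) ∂μ ∂μ = 2 * ∫ x, ∫ y, f x y ∂μ ∂μ := by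
  have hf' : Integrable (uncurry fun x y => f y x) (μ.prod μ) := hf.swap
  calc ∫ x, ∫ y, (f x y + f y x) ∂μ ∂μ
      = ∫ x, ((∫ y, f x y ∂μ) + ∫ y, f y x ∂μ) ∂μ := by
        refine integral_congr_ae ?_
        filter_upwards [hf.prod_right_ae, hf'.prod_right_ae] with x hx hx'
        exact integral_add hx hx'
    _ = (∫ x, ∫ y, f x y ∂μ ∂μ) + ∫ x, ∫ y, f y x ∂μ ∂μ :=
        integral_add hf.integral_prod_left hf'.integral_prod_left
    _ = 2 * ∫ x, ∫ y, f x y ∂μ ∂μ := by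
        rw [integral_integral_swap hf']
        ring

section Shift

variable {E : Type*} [NormedAddCommGroup E] [NormedSpace ℝ E]

def shiftHull (T : E ≃L[ℝ] E) (K L : Set E) (I : Set ℝ) : Set (E × E) :=
  K ×ˢ L ∪ (fun q : E × E × ℝ => (T.symm (q.1 - q.2.2 • q.2.1), q.2.1)) '' (K ×ˢ L ×ˢ I)

theorem IsCompact.shiftHull (T : E ≃L[ℝ] E) {K L : Set E} {I : Set ℝ} (hK : IsCompact K)
    (hL : IsCompact L) (hI : IsCompact I) : IsCompact (shiftHull T K L I) :=
  (hK.prod hL).union ((hK.prod (hL.prod hI)).image (by fun_prop))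

variable {ψ φ : E → ℝ} {T : E ≃L[ℝ] E} {K L : Set E} {p M : ℝ}

theorem support_shift_subset_shiftHull (hp : p ≠ 0) (hφK : support φ ⊆ K)
    (hψL : support ψ ⊆ L) {I : Set ℝ} {c : ℝ} (hc : c ∈ I) :
    support (fun q : E × E => ψ q.2 * |φ q.1 - φ (T q.1 + c • q.2)| ^ p) ⊆
      shiftHull T K L I := by
  rintro ⟨w, z⟩ hq
  obtain ⟨hψz, hφ⟩ := mul_ne_zero_iff.1 hq
  rcases ne_zero_or_ne_zero_of_abs_sub_rpow_ne_zero hp hφ with hw | hw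
  · exact Or.inl ⟨hφK hw, hψL hψz⟩
  · exact Or.inr ⟨(T w + c • z, z, c), ⟨hφK hw, hψL hψz, hc⟩, by simp⟩

theorem support_kernel_subset_image_shiftHull (hp : p ≠ 0) (hφK : support φ ⊆ K)
    (hψL : support ψ ⊆ L) :
    support (fun q : E × E => ψ (q.2 - T q.1) * |φ q.1 - φ q.2| ^ p) ⊆
      (fun q : E × E => (q.1, T q.1 + q.2)) '' shiftHull T K L {1} := by
  rintro ⟨x, y⟩ hq
  refine ⟨(x, y - T x), support_shift_subset_shiftHull hp hφK hψL (mem_singleton 1) ?_, ?_⟩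
  · rw [mem_support] at hq ⊢
    rwa [one_smul, add_sub_cancel]
  · simp only [add_sub_cancel]

section Integrability

variable [MeasurableSpace E] [BorelSpace E] [SecondCountableTopology E]
  {μ ν : Measure E} [IsFiniteMeasureOnCompacts μ] [IsFiniteMeasureOnCompacts ν]

theorem integrable_shift (hp : 0 < p) (hψ : Measurable ψ) (hM : ∀ z, |ψ z| ≤ M)
    (hψL : support ψ ⊆ L) (hL : IsCompact L) (hφ : Continuous φ) (hφc : HasCompactSupport φ)
    (c : ℝ) :
    Integrable (fun q : E × E => ψ q.2 * |φ q.1 - φ (T q.1 + c • q.2)| ^ p) (μ.prod ν) := by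
  obtain ⟨C, hC⟩ := hφc.exists_bound_of_continuous hφ
  exact integrable_of_support_subset_isCompact
    (hφc.isCompact.shiftHull T hL (isCompact_singleton (x := c)))
    (support_shift_subset_shiftHull hp.ne' (subset_tsupport φ) hψL rfl)
    (by fun_prop : Measurable _).aestronglyMeasurable
    fun q => norm_mul_abs_sub_rpow_le (hM _) (hC _) (hC _) hp.le

theorem integrable_kernel (hp : 0 < p) (hψ : Measurable ψ) (hM : ∀ z, |ψ z| ≤ M)
    (hψL : support ψ ⊆ L) (hL : IsCompact L) (hφ : Continuous φ) (hφc : HasCompactSupport φ) :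
    Integrable (fun q : E × E => ψ (q.2 - T q.1) * |φ q.1 - φ q.2| ^ p) (μ.prod ν) := by
  obtain ⟨C, hC⟩ := hφc.exists_bound_of_continuous hφ
  exact integrable_of_support_subset_isCompact
    ((hφc.isCompact.shiftHull T hL isCompact_singleton).image (by fun_prop))
    (support_kernel_subset_image_shiftHull hp.ne' (subset_tsupport φ) hψL)
    (by fun_prop : Measurable _).aestronglyMeasurable
    fun q => norm_mul_abs_sub_rpow_le (hM _) (hC _) (hC _) hp.le

theorem continuous_integral_shift (hp : 0 < p) (hψ : Measurable ψ) (hM : ∀ z, |ψ z| ≤ M)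
    (hψL : support ψ ⊆ L) (hL : IsCompact L) (hφ : Continuous φ) (hφc : HasCompactSupport φ) :
    Continuous fun c : ℝ => ∫ q, ψ q.2 * |φ q.1 - φ (T q.1 + c • q.2)| ^ p ∂(μ.prod ν) := by
  obtain ⟨C, hC⟩ := hφc.exists_bound_of_continuous hφ
  refine continuous_iff_continuousAt.2 fun c₀ => ?_
  set H := shiftHull T (tsupport φ) L (closedBall c₀ 1)
  have hH : IsCompact H := hφc.isCompact.shiftHull T hL (isCompact_closedBall c₀ 1)
  have hbound : ∀ c ∈ closedBall c₀ 1, ∀ q : E × E,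
      ‖ψ q.2 * |φ q.1 - φ (T q.1 + c • q.2)| ^ p‖ ≤ H.indicator (fun _ => M * (2 * C) ^ p) q :=
    fun c hc => norm_le_indicator_of_support_subset
      (support_shift_subset_shiftHull hp.ne' (subset_tsupport φ) hψL hc)
      fun q => norm_mul_abs_sub_rpow_le (hM _) (hC _) (hC _) hp.le
  exact continuousAt_of_dominated
    (Eventually.of_forall fun c => (by fun_prop : Measurable _).aestronglyMeasurable)
    (Eventually.mono (closedBall_mem_nhds c₀ one_pos) fun c hc => ae_of_all _ (hbound c hc))
    ((integrable_indicator_iff hH.measurableSet).2 (integrableOn_const hH.measure_lt_top.ne))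
    (ae_of_all _ fun q => (by fun_prop (disch := exact hp.le) : Continuous _).continuousAt)

end Integrability

variable [MeasurableSpace E] [BorelSpace E] [FiniteDimensional ℝ E]
  (μ : Measure E) [μ.IsAddHaarMeasure]

theorem integral_integral_kernel_comp_inv_smul (hp : 0 < p) (hψ : Measurable ψ)
    (hM : ∀ z, |ψ z| ≤ M) (hψL : support ψ ⊆ L) (hL : IsCompact L) (hφ : Continuous φ)
    (hφc : HasCompactSupport φ) {S : ℝ} (hS : 0 < S) :
    ∫ x, ∫ y, (ψ (y - T x) + ψ (x - T y)) * |φ (S⁻¹ • x) - φ (S⁻¹ • y)| ^ p ∂μ ∂μ =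
      2 * S ^ Module.finrank ℝ E *
        ∫ q, ψ q.2 * |φ q.1 - φ (T q.1 + S⁻¹ • q.2)| ^ p ∂μ.prod μ := by
  set u : E → ℝ := fun x => φ (S⁻¹ • x)
  have hu : HasCompactSupport u := hφc.comp_smul (inv_ne_zero hS.ne')
  have hku : Integrable (uncurry fun x y => ψ (y - T x) * |u x - u y| ^ p) (μ.prod μ) :=
    integrable_kernel hp hψ hM hψL hL (by fun_prop) hu
  calc ∫ x, ∫ y, (ψ (y - T x) + ψ (x - T y)) * |u x - u y| ^ p ∂μ ∂μ
      = ∫ x, ∫ y, (ψ (y - T x) * |u x - u y| ^ p + ψ (x - T y) * |u y - u x| ^ p) ∂μ ∂μ := by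
        simp_rw [abs_sub_comm (u _) (u _), add_mul]
    _ = 2 * ∫ x, ∫ y, ψ (y - T x) * |u x - u y| ^ p ∂μ ∂μ := integral_integral_add_swap hku
    _ = 2 * ∫ x, ∫ z, ψ z * |u x - u (T x + z)| ^ p ∂μ ∂μ := by
        congr 1
        refine integral_congr_ae (ae_of_all _ fun x => ?_)
        simpa only [add_sub_cancel] using
          integral_sub_right_eq_self (μ := μ) (fun z => ψ z * |u x - u (T x + z)| ^ p) (T x)
    _ = 2 * (S ^ Module.finrank ℝ E *
          ∫ w, ∫ z, ψ z * |φ w - φ (T w + S⁻¹ • z)| ^ p ∂μ ∂μ) := by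
        rw [← smul_eq_mul (S ^ _), ← Measure.integral_comp_inv_smul_of_nonneg μ _ hS.le]
        simp only [u, smul_add, map_smul]
    _ = 2 * S ^ Module.finrank ℝ E *
          ∫ q, ψ q.2 * |φ q.1 - φ (T q.1 + S⁻¹ • q.2)| ^ p ∂μ.prod μ := by
        rw [integral_prod _ (integrable_shift hp hψ hM hψL hL hφ hφc _), mul_assoc]

end Shift

theorem lambdaOne_le {d : ℕ} {p : ℝ}
    {K : EuclideanSpace ℝ (Fin d) → EuclideanSpace ℝ (Fin d) → ℝ} (hK : ∀ x y, 0 ≤ K x y)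
    {u : EuclideanSpace ℝ (Fin d) → ℝ} (hu : MemLp u (ENNReal.ofReal p) volume)
    (hu0 : ¬ u =ᵐ[volume] 0) :
    lambdaOne d p K ≤ (∫ x, ∫ y, K x y * |u x - u y| ^ p) / ∫ x, |u x| ^ p := by
  refine csInf_le ⟨0, ?_⟩ ⟨u, hu, hu0, rfl⟩
  rintro _ ⟨v, -, -, rfl⟩
  exact div_nonneg (integral_nonneg fun x => integral_nonneg fun y =>
    mul_nonneg (hK x y) (by positivity)) (integral_nonneg fun x => by positivity)

theorem lambdaOne_le_two_mul_integral_shift {d : ℕ} {p M : ℝ} (hp : 0 < p)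
    {ψ : EuclideanSpace ℝ (Fin d) → ℝ} (hψ : Measurable ψ) (hψnn : ∀ z, 0 ≤ ψ z)
    (hM : ∀ z, |ψ z| ≤ M) {L : Set (EuclideanSpace ℝ (Fin d))} (hψL : support ψ ⊆ L)
    (hL : IsCompact L) (T : EuclideanSpace ℝ (Fin d) ≃L[ℝ] EuclideanSpace ℝ (Fin d))
    {φ : EuclideanSpace ℝ (Fin d) → ℝ} (hφ : Continuous φ) (hφc : HasCompactSupport φ)
    (hφp : ∫ x, |φ x| ^ p = 1) {S : ℝ} (hS : 0 < S) :
    lambdaOne d p (fun x y => ψ (y - T x) + ψ (x - T y)) ≤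
      2 * ∫ q, ψ q.2 * |φ q.1 - φ (T q.1 + S⁻¹ • q.2)| ^ p ∂(volume.prod volume) := by
  set u : EuclideanSpace ℝ (Fin d) → ℝ := fun x => φ (S⁻¹ • x)
  have hu : HasCompactSupport u := hφc.comp_smul (inv_ne_zero hS.ne')
  have hup : ∫ x, |u x| ^ p = S ^ Module.finrank ℝ (EuclideanSpace ℝ (Fin d)) := by
    rw [Measure.integral_comp_inv_smul_of_nonneg volume (fun w => |φ w| ^ p) hS.le, hφp,
      smul_eq_mul, mul_one]
  have hu0 : ¬ u =ᵐ[volume] 0 := fun h => by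
    have : ∫ x, |u x| ^ p = 0 := (integral_congr_ae (g := fun _ => 0) <| h.mono fun x hx => by
      simp [hx, hp.ne']).trans (integral_zero _ _)
    exact (pow_pos hS _).ne' (hup ▸ this)
  calc lambdaOne d p (fun x y => ψ (y - T x) + ψ (x - T y))
      ≤ (∫ x, ∫ y, (ψ (y - T x) + ψ (x - T y)) * |u x - u y| ^ p) / ∫ x, |u x| ^ p :=
        lambdaOne_le (fun x y => add_nonneg (hψnn _) (hψnn _))
          ((by fun_prop : Continuous u).memLp_of_hasCompactSupport hu) hu0
    _ = 2 * ∫ q, ψ q.2 * |φ q.1 - φ (T q.1 + S⁻¹ • q.2)| ^ p ∂(volume.prod volume) := by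
        rw [integral_integral_kernel_comp_inv_smul volume hp hψ hM hψL hL hφ hφc hS, hup]
        field_simp

theorem exists_continuousLinearEquiv_coe_eq_toEuclideanLin {d : ℕ}
    {A : Matrix (Fin d) (Fin d) ℝ} (hA : IsUnit A.det) :
    ∃ T : EuclideanSpace ℝ (Fin d) ≃L[ℝ] EuclideanSpace ℝ (Fin d),
      ⇑T = Matrix.toEuclideanLin A := by
  have hdet : LinearMap.det (Matrix.toEuclideanLin A) ≠ 0 := by
    rw [Matrix.toEuclideanLin_eq_toLin_orthonormal, LinearMap.det_toLin]
    exact hA.ne_zero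
  exact ⟨(LinearMap.equivOfDetNeZero _ hdet).toContinuousLinearEquiv, rfl⟩

theorem first_eigenvalue_upper_bound_general (d : ℕ) (p : ℝ) (hp : 1 ≤ p)
    (ψ : EuclideanSpace ℝ (Fin d) → ℝ)
    (hψmeas : Measurable ψ) (hψnn : ∀ z, 0 ≤ ψ z)
    (hψbdd : ∃ M : ℝ, ∀ z, ψ z ≤ M)
    (hψsupp : ∀ z, ψ z ≠ 0 → z ∈ Metric.closedBall (0 : EuclideanSpace ℝ (Fin d)) 1)
    (A : Matrix (Fin d) (Fin d) ℝ) (hA : IsUnit A.det)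
    (φ : EuclideanSpace ℝ (Fin d) → ℝ)
    (hφsmooth : ContDiff ℝ 1 φ) (hφsupp : HasCompactSupport φ)
    (hφnorm : (∫ x, |φ x| ^ p) = 1) :
    lambdaOne d p (fun x y =>
        ψ (y - Matrix.toEuclideanLin A x) + ψ (x - Matrix.toEuclideanLin A y)) ≤
      2 * (∫ z, ψ z) * ∫ x, |φ x - φ (Matrix.toEuclideanLin A x)| ^ p := by
  obtain ⟨T, hT⟩ := exists_continuousLinearEquiv_coe_eq_toEuclideanLin hA
  obtain ⟨M, hM⟩ := hψbdd
  have hp0 : 0 < p := zero_lt_one.trans_le hp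
  have hψM : ∀ z, |ψ z| ≤ M := fun z => (abs_of_nonneg (hψnn z)).trans_le (hM z)
  have hφ : Continuous φ := hφsmooth.continuous
  set I : ℝ → ℝ := fun c =>
    ∫ q, ψ q.2 * |φ q.1 - φ (T q.1 + c • q.2)| ^ p ∂(volume.prod volume)
  have hI : Tendsto (fun S : ℝ => 2 * I S⁻¹) atTop (𝓝 (2 * I 0)) :=
    (((continuous_integral_shift hp0 hψmeas hψM hψsupp (isCompact_closedBall 0 1) hφ
      hφsupp).tendsto 0).comp tendsto_inv_atTop_zero).const_mul 2
  have hI0 : I 0 = (∫ z, ψ z) * ∫ x, |φ x - φ (T x)| ^ p := by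
    simp only [I, zero_smul, add_zero, mul_comm (ψ _)]
    rw [integral_prod_mul (fun x => |φ x - φ (T x)| ^ p) ψ, mul_comm]
  rw [← hT, mul_assoc, ← hI0]
  exact ge_of_tendsto hI <| (eventually_gt_atTop 0).mono fun S hS =>
    lambdaOne_le_two_mul_integral_shift hp0 hψmeas hψnn hψM hψsupp (isCompact_closedBall 0 1)
      T hφ hφsupp hφnorm hS

theorem first_eigenvalue_upper_bound (d : ℕ) (hd : 1 ≤ d) (p : ℝ) (hp : 1 ≤ p)
    (ψ : EuclideanSpace ℝ (Fin d) → ℝ)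
    (hψmeas : Measurable ψ) (hψnn : ∀ z, 0 ≤ ψ z)
    (hψbdd : ∃ M : ℝ, ∀ z, ψ z ≤ M)
    (hψsupp : ∀ z, ψ z ≠ 0 → z ∈ Metric.closedBall (0 : EuclideanSpace ℝ (Fin d)) 1)
    (A : Matrix (Fin d) (Fin d) ℝ) (hA : IsUnit A.det)
    (φ : EuclideanSpace ℝ (Fin d) → ℝ)
    (hφsmooth : ContDiff ℝ 1 φ) (hφsupp : HasCompactSupport φ)
    (hφnorm : (∫ x, |φ x| ^ p) = 1) :
    lambdaOne d p (fun x y =>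
        ψ (y - Matrix.toEuclideanLin A x) + ψ (x - Matrix.toEuclideanLin A y)) ≤
      2 * (∫ z, ψ z) * ∫ x, |φ x - φ (Matrix.toEuclideanLin A x)| ^ p :=
  first_eigenvalue_upper_bound_general d p hp ψ hψmeas hψnn hψbdd hψsupp A hA φ hφsmooth hφsupp
    hφnorm
end
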